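/- Suppose the matrices M_1,…,M_r satisfy conditions (H0), (H1), (H2) and (H3). Let p ∈ ℤ^r and let w_1, w_2 ∈ W_l. Then there exist l' ≥ l and words w_1', w_2' ∈ W_{l'} such that w_1'|[0,l] = w_1, w_2'|[0,l] = w_2, and the translate τ_p w_1' and w_2' do not agree on [0,l'] ∩ [p, p+l']. -/

import Mathlib

open Matrix

variable {r : ℕ} {A : Type*}

/-- The `j`-th standard basis vector of `ℤ^r`. -/
def evec (r : ℕ) (j : Fin r) : Fin r → ℤ := fun i => if i = j then 1 else 0

/-- `w` represents a word of shape `m` (only its values on `[0,m]` matter):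
`m ≥ 0` and the transition matrices are respected on the box `[0,m]`. -/
def IsWord (M : Fin r → Matrix A A ℤ) (m : Fin r → ℤ) (w : (Fin r → ℤ) → A) : Prop :=
  0 ≤ m ∧ ∀ (l : Fin r → ℤ) (j : Fin r), 0 ≤ l → l + evec r j ≤ m →
    M j (w (l + evec r j)) (w l) = 1

/-- Two representing functions agree on the box `[0,m]`; this is equality of
words of shape `m`. -/
def AgreeOn (m : Fin r → ℤ) (w w' : (Fin r → ℤ) → A) : Prop :=
  ∀ l : Fin r → ℤ, 0 ≤ l → l ≤ m → w l = w' l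

/-- The restriction `w|[k,k+n]`, as a word based at `0`: `(restrictW k w) i = w (i + k)`. -/
def restrictW (k : Fin r → ℤ) (w : (Fin r → ℤ) → A) : (Fin r → ℤ) → A :=
  fun i => w (i + k)

/-- `w` (a word of shape `m`) is `p`-periodic: the translate `τ_p w`, given by
`(τ_p w)(x) = w (x - p)`, agrees with `w` on `[0,m] ∩ [p,p+m]`. -/
def IsPeriodic (p m : Fin r → ℤ) (w : (Fin r → ℤ) → A) : Prop :=
  ∀ x : Fin r → ℤ, 0 ≤ x → x ≤ m → p ≤ x → x ≤ p + m → w (x - p) = w x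

/-- Condition (H0): each `M j` is nonzero. -/
def H0 (M : Fin r → Matrix A A ℤ) : Prop := ∀ j, M j ≠ 0

/-- Condition (H1): unique products of words. -/
def H1 (M : Fin r → Matrix A A ℤ) : Prop :=
  ∀ (m n : Fin r → ℤ) (u v : (Fin r → ℤ) → A),
    IsWord M m u → IsWord M n v → u m = v 0 →
      (∃ w, IsWord M (m + n) w ∧ AgreeOn m w u ∧ AgreeOn n (restrictW m w) v) ∧
      (∀ w w', IsWord M (m + n) w → AgreeOn m w u → AgreeOn n (restrictW m w) v →
        IsWord M (m + n) w' → AgreeOn m w' u → AgreeOn n (restrictW m w') v →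
        AgreeOn (m + n) w w')

/-- Condition (H2): the directed graph on `A` with an edge `a → b` whenever
`M i b a = 1` for some `i` is irreducible. -/
def H2 (M : Fin r → Matrix A A ℤ) : Prop :=
  ∀ a b : A, Relation.ReflTransGen (fun x y => ∃ i, M i y x = 1) a b

/-- Condition (H3): for each nonzero `p ∈ ℤ^r` there is a non-`p`-periodic word. -/
def H3 (M : Fin r → Matrix A A ℤ) : Prop :=
  ∀ p : Fin r → ℤ, p ≠ 0 → ∃ (m : Fin r → ℤ) (w : (Fin r → ℤ) → A),
    IsWord M m w ∧ ¬ IsPeriodic p m w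

/-- Condition (H1a): the matrices commute. -/
def H1a [Fintype A] (M : Fin r → Matrix A A ℤ) : Prop :=
  ∀ i j, M i * M j = M j * M i

/-- Condition (H1b): for `i < j`, the entries of `M i * M j` lie in `{0,1}`. -/
def H1b [Fintype A] (M : Fin r → Matrix A A ℤ) : Prop :=
  ∀ i j, i < j → ∀ a b : A, (M i * M j) b a = 0 ∨ (M i * M j) b a = 1

/-- Condition (H1c): for `i < j < k`, the entries of `M i * M j * M k` lie in `{0,1}`. -/
def H1c [Fintype A] (M : Fin r → Matrix A A ℤ) : Prop :=
  ∀ i j k, i < j → j < k → ∀ a b : A,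
    (M i * M j * M k) b a = 0 ∨ (M i * M j * M k) b a = 1

/-- Condition (H3*). -/
def H3star (M : Fin r → Matrix A A ℤ) : Prop :=
  ∀ (j : Fin r) (m : Fin r → ℤ), m j = 0 → ∀ w : (Fin r → ℤ) → A, IsWord M m w →
    ∃ u u', IsWord M (m + evec r j) u ∧ IsWord M (m + evec r j) u' ∧
      AgreeOn m u w ∧ AgreeOn m u' w ∧ u (evec r j) ≠ u' (evec r j)

/-- `x` represents the product word `uv` of `u ∈ W_m` and `v ∈ W_n`. -/
def IsProd (M : Fin r → Matrix A A ℤ) (m n : Fin r → ℤ)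
    (u v x : (Fin r → ℤ) → A) : Prop :=
  IsWord M (m + n) x ∧ AgreeOn m x u ∧ AgreeOn n (restrictW m x) v

/-! Under (H3) some letter `c` has two distinct successors `d ≠ d'` in some direction `j`:
otherwise `M j` is the graph of a permutation of the finite alphabet, and every word would be
`(N • e_j)`-periodic for `N` the order of that permutation. By (H1) and (H2), `w₂` extends to a
word whose corner `x - e_j` lies beyond `p` and carries `c`; its two continuations by `d` and
`d'` differ at `x`, so at least one of them differs from `τ_p w₁'` there. Finally (H0)–(H2) let
every word be extended to any larger shape, so all the words can be given a common shape `l'`. -/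

section Words

variable {M : Fin r → Matrix A A ℤ} {m m' : Fin r → ℤ} {u w : (Fin r → ℤ) → A}

theorem evec_self (j : Fin r) : evec r j j = 1 := if_pos rfl

theorem evec_of_ne {i j : Fin r} (h : i ≠ j) : evec r j i = 0 := if_neg h

theorem evec_nonneg (j : Fin r) : 0 ≤ evec r j := fun i => by
  unfold evec; split_ifs <;> simp

theorem evec_ne_zero (j : Fin r) : evec r j ≠ 0 := fun h => by
  simpa [evec_self] using congrFun h j

theorem le_add_evec (m : Fin r → ℤ) (j : Fin r) : m ≤ m + evec r j :=
  le_add_of_nonneg_right (evec_nonneg j)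

theorem add_evec_le {j : Fin r} (hmm' : m ≤ m') (hj : m j < m' j) : m + evec r j ≤ m' := by
  intro i
  by_cases hij : i = j
  · subst hij; simp only [Pi.add_apply, evec_self]; omega
  · simpa [evec_of_ne hij] using hmm' i

theorem eq_zero_of_add_evec_le_evec {l : Fin r → ℤ} {i j : Fin r} (hl : 0 ≤ l)
    (h : l + evec r i ≤ evec r j) : l = 0 ∧ i = j := by
  have hij : i = j := by
    by_contra hij
    have := h i
    have hli : 0 ≤ l i := hl i
    simp only [Pi.add_apply, evec_self, evec_of_ne hij] at this
    omega
  subst hij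
  refine ⟨funext fun k => le_antisymm ?_ (hl k), rfl⟩
  simpa using h k

theorem AgreeOn.refl : AgreeOn m w w := fun _ _ _ => rfl

theorem AgreeOn.trans {v : (Fin r → ℤ) → A} (hwv : AgreeOn m w v) (hvu : AgreeOn m v u) :
    AgreeOn m w u := fun l hl hlm => (hwv l hl hlm).trans (hvu l hl hlm)

theorem AgreeOn.mono {v : (Fin r → ℤ) → A} (h : AgreeOn m' w v) (hmm' : m ≤ m') :
    AgreeOn m w v := fun l hl hlm => h l hl (hlm.trans hmm')

theorem isWord_const (M : Fin r → Matrix A A ℤ) (a : A) : IsWord M 0 (fun _ => a) :=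
  ⟨le_rfl, fun l j hl h => absurd (h j) (by
    have hlj : 0 ≤ l j := hl j
    simp only [Pi.add_apply, evec_self, Pi.zero_apply]
    omega)⟩

theorem isWord_evec [DecidableEq (Fin r → ℤ)] {j : Fin r} {a b : A} (hab : M j b a = 1) :
    IsWord M (evec r j) (fun x => if x = 0 then a else b) := by
  refine ⟨evec_nonneg j, fun l i hl h => ?_⟩
  obtain ⟨rfl, rfl⟩ := eq_zero_of_add_evec_le_evec hl h
  simpa [evec_ne_zero] using hab

theorem IsWord.exists_append_edge (h1 : H1 M) (hu : IsWord M m u) {j : Fin r} {b : A}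
    (hb : M j b (u m) = 1) :
    ∃ w, IsWord M (m + evec r j) w ∧ AgreeOn m w u ∧ w (m + evec r j) = b := by
  classical
  obtain ⟨w, hw, hwu, hwv⟩ := (h1 m _ u _ hu (isWord_evec hb) (if_pos rfl).symm).1
  refine ⟨w, hw, hwu, ?_⟩
  simpa [restrictW, evec_ne_zero, add_comm] using hwv (evec r j) (evec_nonneg j) le_rfl

theorem IsWord.exists_append_path (h1 : H1 M) (hu : IsWord M m u) {b : A}
    (h : Relation.ReflTransGen (fun x y => ∃ i, M i y x = 1) (u m) b) :
    ∃ m' w, m ≤ m' ∧ IsWord M m' w ∧ AgreeOn m w u ∧ w m' = b := by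
  induction h with
  | refl => exact ⟨m, u, le_rfl, hu, AgreeOn.refl, rfl⟩
  | tail _ hcb ih =>
    obtain ⟨m', w, hmm', hw, hwu, hwc⟩ := ih
    obtain ⟨i, hi⟩ := hcb
    obtain ⟨w', hw', hw'w, hw'b⟩ := hw.exists_append_edge h1 (hwc ▸ hi)
    exact ⟨m' + evec r i, w', hmm'.trans (le_add_evec m' i), hw',
      (hw'w.mono hmm').trans hwu, hw'b⟩

theorem exists_entry_eq_one (hM : ∀ j (a b : A), M j b a = 0 ∨ M j b a = 1) (h0 : H0 M)
    (j : Fin r) : ∃ a b, M j b a = 1 := by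
  by_contra! h
  exact h0 j (Matrix.ext fun b a => (hM j a b).resolve_right (h a b))

theorem exists_succ (hM : ∀ j (a b : A), M j b a = 0 ∨ M j b a = 1) (h0 : H0 M) (h1 : H1 M)
    (h2 : H2 M) (j : Fin r) (a : A) : ∃ b, M j b a = 1 := by
  obtain ⟨a₀, b₀, hab⟩ := exists_entry_eq_one hM h0 j
  obtain ⟨m, w, -, hw, hwa, hwa₀⟩ := (isWord_const M a).exists_append_path h1 (h2 a a₀)
  obtain ⟨w', hw', hw'w, -⟩ := hw.exists_append_edge h1 (hwa₀ ▸ hab)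
  refine ⟨w' (0 + evec r j), ?_⟩
  have := hw'.2 0 j le_rfl (add_le_add_left hw.1 _)
  rwa [hw'w 0 le_rfl hw.1, hwa 0 le_rfl le_rfl] at this

theorem exists_pred (hM : ∀ j (a b : A), M j b a = 0 ∨ M j b a = 1) (h0 : H0 M) (h1 : H1 M)
    (h2 : H2 M) (j : Fin r) (a : A) : ∃ b, M j a b = 1 := by
  obtain ⟨a₀, b₀, hab⟩ := exists_entry_eq_one hM h0 j
  obtain ⟨w, hw, -, hwb₀⟩ := (isWord_const M a₀).exists_append_edge h1 hab
  rw [zero_add] at hw hwb₀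
  obtain ⟨m, w', hm, hw', -, hw'a⟩ := hw.exists_append_path h1 (hwb₀ ▸ h2 b₀ a)
  refine ⟨w' (m - evec r j), ?_⟩
  have := hw'.2 (m - evec r j) j (sub_nonneg.2 hm) (by rw [sub_add_cancel])
  rwa [sub_add_cancel, hw'a] at this

-- The binders are explicit because the recursive call changes `m` and `u`.
theorem IsWord.exists_extension {M : Fin r → Matrix A A ℤ} {m m' : Fin r → ℤ}
    {u : (Fin r → ℤ) → A} (hM : ∀ j (a b : A), M j b a = 0 ∨ M j b a = 1) (h0 : H0 M)
    (h1 : H1 M) (h2 : H2 M) (hu : IsWord M m u) (hmm' : m ≤ m') :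
    ∃ w, IsWord M m' w ∧ AgreeOn m w u := by
  rcases hmm'.eq_or_lt with rfl | hlt
  · exact ⟨u, hu, AgreeOn.refl⟩
  obtain ⟨j, hj⟩ := (Pi.lt_def.1 hlt).2
  obtain ⟨b, hb⟩ := exists_succ hM h0 h1 h2 j (u m)
  obtain ⟨v, hv, hvu, -⟩ := hu.exists_append_edge h1 hb
  obtain ⟨w, hw, hwv⟩ := IsWord.exists_extension hM h0 h1 h2 hv (add_evec_le hmm' hj)
  exact ⟨w, hw, (hwv.mono (le_add_evec m j)).trans hvu⟩
termination_by (∑ i, (m' i - m i)).toNat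
decreasing_by
  have hsum : ∑ i, (m' i - (m + evec r j) i) = ∑ i, (m' i - m i) - 1 := by
    simp [evec, sub_add_eq_sub_sub, Finset.sum_sub_distrib]
  have hpos : m' j - m j ≤ ∑ i, (m' i - m i) :=
    Finset.single_le_sum (fun i _ => sub_nonneg.2 (hmm' i)) (Finset.mem_univ j)
  omega

theorem IsWord.isPeriodic_of_perm {j : Fin r} (e : Equiv.Perm A)
    (he : ∀ a b, M j b a = 1 → b = e a) {N : ℕ} (hN : e ^ N = 1) (hw : IsWord M m w) :
    IsPeriodic ((N : ℤ) • evec r j) m w := by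
  intro x _ hxm hpx _
  set y := x - (N : ℤ) • evec r j
  have hy : 0 ≤ y := sub_nonneg.2 hpx
  have hyk (k : ℕ) : 0 ≤ y + (k : ℤ) • evec r j :=
    add_nonneg hy (smul_nonneg (Int.natCast_nonneg k) (evec_nonneg j))
  have orbit : ∀ k ≤ N, w (y + (k : ℤ) • evec r j) = (e ^ k) (w y) := by
    intro k hk
    induction k with
    | zero => simp
    | succ k ih =>
      have hsucc : y + (k : ℤ) • evec r j + evec r j = y + ((k + 1 : ℕ) : ℤ) • evec r j := by
        rw [Nat.cast_succ, add_smul, one_smul, add_assoc]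
      have hle : y + ((k + 1 : ℕ) : ℤ) • evec r j ≤ m := by
        calc y + ((k + 1 : ℕ) : ℤ) • evec r j ≤ y + (N : ℤ) • evec r j :=
              add_le_add_right (smul_le_smul_of_nonneg_right (by exact_mod_cast hk)
                (evec_nonneg j)) _
          _ = x := sub_add_cancel _ _
          _ ≤ m := hxm
      have hstep := hw.2 _ j (hyk k) (hsucc ▸ hle)
      rw [← hsucc, he _ _ hstep, ih (Nat.le_of_succ_le hk), pow_succ',
        Equiv.Perm.mul_apply]
  have := orbit N le_rfl
  rwa [sub_add_cancel, hN, Equiv.Perm.one_apply, eq_comm] at this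

theorem exists_branching [Finite A] (hr : 0 < r)
    (hM : ∀ j (a b : A), M j b a = 0 ∨ M j b a = 1) (h0 : H0 M) (h1 : H1 M) (h2 : H2 M)
    (h3 : H3 M) : ∃ j c d d', M j d c = 1 ∧ M j d' c = 1 ∧ d ≠ d' := by
  by_contra! hdet
  let j : Fin r := ⟨0, hr⟩
  choose f hf using exists_succ hM h0 h1 h2 j
  have hfM (a b : A) (hab : M j b a = 1) : b = f a := hdet j a b (f a) hab (hf a)
  have hsurj : Function.Surjective f := fun a =>
    (exists_pred hM h0 h1 h2 j a).imp fun b hb => (hfM b a hb).symm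
  let e := Equiv.ofBijective f (Finite.surjective_iff_bijective.1 hsurj)
  have hp : ((orderOf e : ℕ) : ℤ) • evec r j ≠ 0 :=
    smul_ne_zero (by exact_mod_cast (orderOf_pos e).ne') (evec_ne_zero j)
  obtain ⟨m, w, hw, hnper⟩ := h3 _ hp
  exact hnper (hw.isPeriodic_of_perm e hfM (pow_orderOf_eq_one e))

theorem IsWord.exists_extensions_ne [Finite A] (hr : 0 < r)
    (hM : ∀ j (a b : A), M j b a = 0 ∨ M j b a = 1) (h0 : H0 M) (h1 : H1 M) (h2 : H2 M)
    (h3 : H3 M) (hu : IsWord M m u) (P : Fin r → ℤ) :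
    ∃ x, m ≤ x ∧ P ≤ x ∧ ∀ l, x ≤ l → ∃ B B', IsWord M l B ∧ IsWord M l B' ∧
      AgreeOn m B u ∧ AgreeOn m B' u ∧ B x ≠ B' x := by
  obtain ⟨j, c, d, d', hd, hd', hdd'⟩ := exists_branching hr hM h0 h1 h2 h3
  obtain ⟨v, hv, hvu⟩ := hu.exists_extension hM h0 h1 h2 (le_sup_left : m ≤ m ⊔ P)
  obtain ⟨n, v', hn, hv', hv'v, hv'c⟩ := hv.exists_append_path h1 (h2 _ c)
  have hmn : m ≤ n := le_sup_left.trans hn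
  have hv'u : AgreeOn m v' u := (hv'v.mono le_sup_left).trans hvu
  have hmx : m ≤ n + evec r j := hmn.trans (le_add_evec n j)
  refine ⟨n + evec r j, hmx, (le_sup_right.trans hn).trans (le_add_evec n j), fun l hl => ?_⟩
  obtain ⟨B, hB, hBv', hBd⟩ := hv'.exists_append_edge h1 (hv'c ▸ hd)
  obtain ⟨B', hB', hB'v', hB'd'⟩ := hv'.exists_append_edge h1 (hv'c ▸ hd')
  obtain ⟨C, hC, hCB⟩ := hB.exists_extension hM h0 h1 h2 hl
  obtain ⟨C', hC', hC'B'⟩ := hB'.exists_extension hM h0 h1 h2 hl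
  have hx : 0 ≤ n + evec r j := hv'.1.trans (le_add_evec n j)
  refine ⟨C, C', hC, hC', (hCB.mono hmx).trans ((hBv'.mono hmn).trans hv'u),
    (hC'B'.mono hmx).trans ((hB'v'.mono hmn).trans hv'u), ?_⟩
  rwa [hCB _ hx le_rfl, hC'B' _ hx le_rfl, hBd, hB'd']

end Words

theorem stmt_15_general [Fintype A] (hr : 0 < r)
    (M : Fin r → Matrix A A ℤ)
    (hM : ∀ j (a b : A), M j b a = 0 ∨ M j b a = 1)
    (h0 : H0 M) (h1 : H1 M) (h2 : H2 M) (h3 : H3 M)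
    (p l : Fin r → ℤ) (w₁ w₂ : (Fin r → ℤ) → A)
    (hw1 : IsWord M l w₁) (hw2 : IsWord M l w₂) :
    ∃ (l' : Fin r → ℤ) (w₁' w₂' : (Fin r → ℤ) → A),
      l ≤ l' ∧ IsWord M l' w₁' ∧ IsWord M l' w₂' ∧
      AgreeOn l w₁' w₁ ∧ AgreeOn l w₂' w₂ ∧
      ∃ x : Fin r → ℤ, 0 ≤ x ∧ x ≤ l' ∧ p ≤ x ∧ x ≤ p + l' ∧
        w₁' (x - p) ≠ w₂' x := by
  obtain ⟨x, hlx, hpx, hext⟩ := hw2.exists_extensions_ne hr hM h0 h1 h2 h3 p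
  have hxl' : x ≤ x ⊔ (x - p) := le_sup_left
  have hxpl' : x ≤ p + (x ⊔ (x - p)) := sub_le_iff_le_add'.1 le_sup_right
  have hx0 : 0 ≤ x := hw2.1.trans hlx
  obtain ⟨w₁', hw₁', hw₁'w₁⟩ := hw1.exists_extension hM h0 h1 h2 (hlx.trans hxl')
  obtain ⟨B, B', hB, hB', hBw₂, hB'w₂, hBB'⟩ := hext _ hxl'
  rcases hBB'.ne_or_ne (w₁' (x - p)) with hne | hne
  · exact ⟨_, w₁', B, hlx.trans hxl', hw₁', hB, hw₁'w₁, hBw₂, x, hx0, hxl', hpx, hxpl',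
      hne.symm⟩
  · exact ⟨_, w₁', B', hlx.trans hxl', hw₁', hB', hw₁'w₁, hB'w₂, x, hx0, hxl', hpx, hxpl',
      hne.symm⟩

/-- under (H0)-(H3), any `w₁, w₂ ∈ W_l` extend to words
`w₁', w₂' ∈ W_{l'}`, `l' ≥ l`, such that `τ_p w₁'` and `w₂'` do not agree on
`[0,l'] ∩ [p,p+l']`. -/
theorem stmt_15 [Fintype A] [Nonempty A] (hr : 0 < r)
    (M : Fin r → Matrix A A ℤ)
    (hM : ∀ j (a b : A), M j b a = 0 ∨ M j b a = 1)
    (h0 : H0 M) (h1 : H1 M) (h2 : H2 M) (h3 : H3 M)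
    (p l : Fin r → ℤ) (w₁ w₂ : (Fin r → ℤ) → A)
    (hw1 : IsWord M l w₁) (hw2 : IsWord M l w₂) :
    ∃ (l' : Fin r → ℤ) (w₁' w₂' : (Fin r → ℤ) → A),
      l ≤ l' ∧ IsWord M l' w₁' ∧ IsWord M l' w₂' ∧
      AgreeOn l w₁' w₁ ∧ AgreeOn l w₂' w₂ ∧
      ∃ x : Fin r → ℤ, 0 ≤ x ∧ x ≤ l' ∧ p ≤ x ∧ x ≤ p + l' ∧
        w₁' (x - p) ≠ w₂' x :=
  stmt_15_general hr M hM h0 h1 h2 h3 p l w₁ w₂ hw1 hw2
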